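/- There exists a type-maximal set of 27 mutually orthogonal binary frequency squares of type (324;315,9); that is, 27 pairwise orthogonal binary frequency squares of order 324, each with exactly 9 ones per row and column, such that no binary frequency square of type (324;315,9) is orthogonal to all 27 of them. -/
import Mathlib
set_option maxRecDepth 10000

open Finset

/-- A binary frequency square of type `(n; n - lam1, lam1)`: an `n × n` `(0,1)`-matrix
with exactly `lam1` ones (hence `n - lam1` zeros) in every row and every column. -/
def IsBFS (n lam1 : ℕ) (F : Fin n → Fin n → ℕ) : Prop :=
  (∀ i j, F i j = 0 ∨ F i j = 1) ∧
  (∀ i : Fin n, (univ.filter (fun j => F i j = 1)).card = lam1) ∧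
  (∀ j : Fin n, (univ.filter (fun i => F i j = 1)).card = lam1)

/-- Two binary frequency squares (with `lam1` resp. `mu1` ones per row and column)
are orthogonal: the number of cells in which both have entry 1 equals `lam1 * mu1`. -/
def OrthBFS (n lam1 mu1 : ℕ) (F G : Fin n → Fin n → ℕ) : Prop :=
  ((univ : Finset (Fin n × Fin n)).filter
    (fun p => F p.1 p.2 = 1 ∧ G p.1 p.2 = 1)).card = lam1 * mu1

def Pm : Fin 27 → Fin 36 → Fin 36 :=
  ![![15,27,33,35,24,26,25,23,22,14,10,13,0,1,28,11,12,20,6,31,17,9,30,19,21,8,7,32,3,2,5,18,29,4,34,16],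
  ![16,28,34,33,25,24,26,21,23,14,12,11,29,0,1,18,9,13,15,6,32,20,10,31,7,22,8,2,30,3,27,5,19,17,4,35],
  ![17,29,35,34,26,25,24,22,21,9,12,13,1,27,0,14,19,10,30,16,6,32,18,11,8,7,23,3,2,31,20,28,5,33,15,4],
  ![9,30,27,29,18,20,19,26,25,14,15,23,17,13,16,0,1,31,24,8,7,6,34,11,12,33,22,4,28,10,35,3,2,5,21,32],
  ![10,31,28,27,19,18,20,24,26,21,12,16,17,15,14,32,0,1,7,25,8,9,6,35,23,13,34,11,4,29,2,33,3,30,5,22],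
  ![11,32,29,28,20,19,18,25,24,17,22,13,12,15,16,1,30,0,8,7,26,33,10,6,35,21,14,27,9,4,3,2,34,23,31,5],
  ![12,33,30,32,21,23,22,20,19,0,1,34,17,9,26,11,16,10,15,27,25,18,8,7,6,28,14,5,24,35,4,31,13,29,3,2],
  ![13,34,31,30,22,21,23,18,20,35,0,1,24,15,10,11,9,17,26,16,28,7,19,8,12,6,29,33,5,25,14,4,32,2,27,3],
  ![14,35,32,31,23,22,21,19,18,1,33,0,11,25,16,15,9,10,29,24,17,8,7,20,27,13,6,26,34,5,30,12,4,3,2,28],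
  ![24,9,15,17,33,35,34,32,31,14,3,2,5,27,11,4,16,25,23,19,22,0,1,10,20,21,29,6,13,26,18,12,28,30,8,7],
  ![25,10,16,15,34,33,35,30,32,2,12,3,9,5,28,26,4,17,23,21,20,11,0,1,27,18,22,24,6,14,29,19,13,7,31,8],
  ![26,11,17,16,35,34,33,31,30,3,2,13,29,10,5,15,24,4,18,21,22,1,9,0,23,28,19,12,25,6,14,27,20,8,7,32],
  ![18,12,9,11,27,29,28,35,34,4,10,19,17,3,2,5,30,14,23,24,32,26,22,25,0,1,13,33,8,7,6,16,20,21,15,31],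
  ![19,13,10,9,28,27,29,33,35,20,4,11,2,15,3,12,5,31,30,21,25,26,24,23,14,0,1,7,34,8,18,6,17,32,22,16],
  ![20,14,11,10,29,28,27,34,33,9,18,4,3,2,16,32,13,5,26,31,22,21,24,25,1,12,0,8,7,35,15,19,6,17,30,23],
  ![21,15,12,14,30,32,31,29,28,5,33,17,4,13,22,11,3,2,0,1,16,26,18,35,20,25,19,24,9,34,27,8,7,6,10,23],
  ![22,16,13,12,31,30,32,27,29,15,5,34,23,4,14,2,9,3,17,0,1,33,24,19,20,18,26,35,25,10,7,28,8,21,6,11],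
  ![23,17,14,13,32,31,30,28,27,35,16,5,12,21,4,3,2,10,1,15,0,20,34,25,24,18,19,11,33,26,8,7,29,9,22,6],
  ![33,18,24,26,15,17,16,14,13,6,22,35,27,21,10,12,8,7,23,3,2,5,9,20,4,25,34,32,28,31,0,1,19,29,30,11],
  ![34,19,25,24,16,15,17,12,14,33,6,23,11,28,22,7,13,8,2,21,3,18,5,10,35,4,26,32,30,29,20,0,1,9,27,31],
  ![35,20,26,25,17,16,15,13,12,21,34,6,23,9,29,8,7,14,3,2,22,11,19,5,24,33,4,27,30,31,1,18,0,32,10,28],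
  ![27,21,18,20,9,11,10,17,16,15,8,7,6,25,29,30,24,13,4,19,28,26,3,2,5,12,23,32,33,14,35,31,34,0,1,22],
  ![28,22,19,18,10,9,11,15,17,7,16,8,27,6,26,14,31,25,29,4,20,2,24,3,21,5,13,12,30,34,35,33,32,23,0,1],
  ![29,23,20,19,11,10,9,16,15,8,7,17,24,28,6,26,12,32,18,27,4,3,2,25,14,22,5,35,13,31,30,33,34,1,21,0],
  ![30,24,21,23,12,14,13,11,10,33,18,16,9,8,7,6,19,32,5,15,26,4,22,31,20,3,2,0,1,25,35,27,17,29,34,28],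
  ![31,25,22,21,13,12,14,9,11,17,34,19,7,10,8,30,6,20,24,5,16,32,4,23,2,18,3,26,0,1,15,33,28,29,27,35],
  ![32,26,23,22,14,13,12,10,9,20,15,35,8,7,11,18,31,6,17,25,5,21,30,4,3,2,19,1,24,0,29,16,34,33,27,28]]

def Qm : Fin 27 → Fin 36 → Fin 36 :=
  ![![12,13,29,28,33,30,18,26,25,21,10,15,16,11,9,0,35,20,31,23,17,24,8,7,4,6,5,1,14,32,22,19,27,2,34,3],
  ![13,14,27,29,34,31,19,24,26,16,22,11,10,17,9,18,0,33,15,32,21,7,25,8,5,4,6,30,1,12,28,23,20,3,2,35],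
  ![14,12,28,27,35,32,20,25,24,9,17,23,10,11,15,34,19,0,22,16,30,8,7,26,6,5,4,13,31,1,18,29,21,33,3,2],
  ![15,16,32,31,27,33,21,20,19,0,29,23,24,13,9,10,14,12,4,6,5,34,26,11,18,8,7,2,28,3,1,17,35,25,22,30],
  ![16,17,30,32,28,34,22,18,20,21,0,27,10,25,14,13,11,12,5,4,6,9,35,24,7,19,8,3,2,29,33,1,15,31,26,23],
  ![17,15,31,30,29,35,23,19,18,28,22,0,12,11,26,13,14,9,6,5,4,25,10,33,8,7,20,27,3,2,16,34,1,21,32,24],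
  ![9,10,35,34,30,27,24,23,22,13,17,15,0,32,26,18,16,12,21,8,7,4,6,5,28,20,14,19,25,33,2,31,3,1,11,29],
  ![10,11,33,35,31,28,25,21,23,16,14,15,24,0,30,13,19,17,7,22,8,5,4,6,12,29,18,34,20,26,3,2,32,27,1,9],
  ![11,9,34,33,32,29,26,22,21,16,17,12,31,25,0,15,14,20,8,7,23,6,5,4,19,13,27,24,35,18,30,3,2,10,28,1],
  ![21,22,11,10,15,12,27,35,34,1,23,14,31,28,9,2,16,3,30,19,24,25,20,18,0,17,29,13,32,26,33,8,7,4,6,5],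
  ![22,23,9,11,16,13,28,33,35,12,1,21,10,32,29,3,2,17,25,31,20,19,26,18,27,0,15,24,14,30,7,34,8,5,4,6],
  ![23,21,10,9,17,14,29,34,33,22,13,1,27,11,30,15,3,2,18,26,32,19,20,24,16,28,0,31,25,12,8,7,35,6,5,4],
  ![24,25,14,13,9,15,30,29,28,2,10,3,1,26,17,34,31,12,0,11,32,33,22,18,19,23,21,4,6,5,16,35,20,27,8,7],
  ![25,26,12,14,10,16,31,27,29,3,2,11,15,1,24,13,35,32,30,0,9,19,34,23,22,20,21,5,4,6,18,17,33,7,28,8],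
  ![26,24,13,12,11,17,32,28,27,9,3,2,25,16,1,30,14,33,10,31,0,21,20,35,22,23,18,6,5,4,34,19,15,8,7,29],
  ![18,19,17,16,12,9,33,32,31,28,34,15,2,13,3,1,20,11,22,26,24,0,14,35,27,25,21,30,8,7,4,6,5,10,29,23],
  ![19,20,15,17,13,10,34,30,32,16,29,35,3,2,14,9,1,18,25,23,24,33,0,12,22,28,26,7,31,8,5,4,6,21,11,27],
  ![20,18,16,15,14,11,35,31,30,33,17,27,12,3,2,19,10,1,25,26,21,13,34,0,24,23,29,8,7,32,6,5,4,28,22,9],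
  ![30,31,20,19,24,21,9,17,16,22,14,35,15,8,7,4,6,5,1,32,23,13,10,18,2,25,3,12,28,33,34,29,27,0,26,11],
  ![31,32,18,20,25,22,10,15,17,33,23,12,7,16,8,5,4,6,21,1,30,19,14,11,3,2,26,34,13,29,28,35,27,9,0,24],
  ![32,30,19,18,26,23,11,16,15,13,34,21,8,7,17,6,5,4,31,22,1,9,20,12,24,3,2,27,35,14,28,29,33,25,10,0],
  ![33,34,23,22,18,24,12,11,10,4,6,5,25,17,29,9,8,7,2,19,3,1,35,26,16,13,21,0,20,14,15,31,27,28,32,30],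
  ![34,35,21,23,19,25,13,9,11,5,4,6,27,26,15,7,10,8,3,2,20,24,1,33,22,17,14,12,0,18,28,16,32,31,29,30],
  ![35,33,22,21,20,26,14,10,9,6,5,4,16,28,24,8,7,11,18,3,2,34,25,1,12,23,15,19,13,0,30,29,17,31,32,27],
  ![27,28,26,25,21,18,15,14,13,12,8,7,4,6,5,19,11,32,10,16,24,2,22,3,1,29,20,31,35,33,0,23,17,9,34,30],
  ![28,29,24,26,22,19,16,12,14,7,13,8,5,4,6,30,20,9,25,11,17,3,2,23,18,1,27,34,32,33,15,0,21,31,10,35],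
  ![29,27,25,24,23,20,17,13,12,8,7,14,6,5,4,10,31,18,15,26,9,21,3,2,28,19,1,34,35,30,22,16,0,33,32,11]]

def Av : Fin 36 → ℕ := fun k => if k.1 < 9 then 1 else 0

def blk (j : Fin 324) : Fin 36 := ⟨j.1 / 9, by omega⟩

def Fsq : Fin 27 → Fin 324 → Fin 324 → ℕ := fun t i j => if blk j = Pm t (blk i) then 1 else 0

lemma Fsq_eq_one {t : Fin 27} {i j : Fin 324} :
    Fsq t i j = 1 ↔ blk j = Pm t (blk i) := by
  unfold Fsq; split <;> simp_all

lemma dQP : ∀ (t : Fin 27) (k : Fin 36), Qm t (Pm t k) = k := by decide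

lemma dPQ : ∀ (t : Fin 27) (k : Fin 36), Pm t (Qm t k) = k := by decide

lemma d3 : ∀ s t : Fin 27, s ≠ t → (univ.filter fun k => Pm s k = Pm t k).card = 1 := by decide

lemma d4 : ∀ k l : Fin 36,
    (((univ.filter fun t : Fin 27 => Pm t k = l).card : ℕ) : ZMod 2)
      = (Av k : ZMod 2) + (Av l : ZMod 2) := by decide

lemma d5 : ((∑ k, Av k : ℕ) : ZMod 2) = 1 := by decide

lemma hba : ∀ (a : Fin 36) (b : Fin 9), blk (finProdFinEquiv (a, b)) = a := by decide

lemma sum_blk {M : Type*} [AddCommMonoid M] (g : Fin 36 → M) :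
    ∑ j : Fin 324, g (blk j) = ∑ v : Fin 36, 9 • g v := by
  rw [← Equiv.sum_comp (finProdFinEquiv : Fin 36 × Fin 9 ≃ Fin 324) (fun j => g (blk j)),
    Fintype.sum_prod_type]
  simp only [hba]
  simp

lemma card_blk (v : Fin 36) : (univ.filter fun j : Fin 324 => blk j = v).card = 9 := by
  rw [Finset.card_filter, sum_blk (fun k => if k = v then 1 else 0)]
  simp

lemma cardPair (R : Fin 36 → Fin 36 → Prop) [∀ k l, Decidable (R k l)] :
    ((univ : Finset (Fin 324 × Fin 324)).filter fun p => R (blk p.1) (blk p.2)).card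
      = 81 * ((univ : Finset (Fin 36 × Fin 36)).filter fun q => R q.1 q.2).card := by
  rw [Finset.card_filter, Finset.card_filter, Fintype.sum_prod_type, Fintype.sum_prod_type]
  calc (∑ i : Fin 324, ∑ j : Fin 324, if R (blk i) (blk j) then 1 else 0)
      = ∑ i : Fin 324, ∑ l : Fin 36, 9 • (if R (blk i) l then 1 else 0) :=
        Finset.sum_congr rfl fun i _ => sum_blk (fun l => if R (blk i) l then 1 else 0)
    _ = ∑ k : Fin 36, 9 • ∑ l : Fin 36, 9 • (if R k l then 1 else 0) :=
        sum_blk (fun k => ∑ l : Fin 36, 9 • (if R k l then 1 else 0))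
    _ = 81 * ∑ k : Fin 36, ∑ l : Fin 36, if R k l then 1 else 0 := by
        simp only [Finset.smul_sum, smul_smul, smul_eq_mul, ← Finset.mul_sum]
        norm_num [Finset.mul_sum]
        exact Finset.sum_congr rfl fun k _ => by ring

lemma row_count (t : Fin 27) (i : Fin 324) :
    (univ.filter fun j => Fsq t i j = 1).card = 9 := by
  simp only [Fsq_eq_one]; exact card_blk _

lemma col_iff (t : Fin 27) (i j : Fin 324) :
    (Fsq t i j = 1) ↔ blk i = Qm t (blk j) := by
  rw [Fsq_eq_one]
  constructor
  · intro h; rw [h, dQP]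
  · intro h; rw [h, dPQ]

lemma col_count (t : Fin 27) (j : Fin 324) :
    (univ.filter fun i => Fsq t i j = 1).card = 9 := by
  simp only [col_iff]; exact card_blk _

lemma pair_inner (a b : Fin 36) :
    (∑ l : Fin 36, if (l = a ∧ l = b) then 1 else 0) = if a = b then 1 else 0 := by
  by_cases h : a = b
  · subst h
    rw [if_pos rfl]
    simp
  · rw [if_neg h]
    apply Finset.sum_eq_zero
    intro l _
    rw [if_neg]
    rintro ⟨h1, h2⟩
    exact h (h1.symm.trans h2)

lemma orth_pair (s t : Fin 27) (hst : s ≠ t) :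
    ((univ : Finset (Fin 324 × Fin 324)).filter
      fun p => Fsq s p.1 p.2 = 1 ∧ Fsq t p.1 p.2 = 1).card = 81 := by
  simp only [Fsq_eq_one]
  rw [cardPair (fun k l => l = Pm s k ∧ l = Pm t k)]
  have h2 : ((univ : Finset (Fin 36 × Fin 36)).filter
      fun q => q.2 = Pm s q.1 ∧ q.2 = Pm t q.1).card
      = (univ.filter fun k => Pm s k = Pm t k).card := by
    rw [Finset.card_filter, Finset.card_filter, Fintype.sum_prod_type]
    exact Finset.sum_congr rfl fun k _ => pair_inner (Pm s k) (Pm t k)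
  rw [h2, d3 s t hst]

def cm (k l : Fin 36) : ℕ := (univ.filter fun t : Fin 27 => Pm t k = l).card

lemma fsq_flip (t : Fin 27) (p : Fin 324 × Fin 324) :
    (Fsq t p.1 p.2 = 1) ↔ (Pm t (blk p.1) = blk p.2) := Fsq_eq_one.trans eq_comm

lemma no_common (G : Fin 324 → Fin 324 → ℕ) (hG : IsBFS 324 9 G)
    (horth : ∀ t : Fin 27, OrthBFS 324 9 9 (Fsq t) G) : False := by
  obtain ⟨_hz, hrow, hcol⟩ := hG
  -- the double-counted sum
  set N : ℕ := ∑ t : Fin 27,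
    ((univ : Finset (Fin 324 × Fin 324)).filter
      (fun p => Fsq t p.1 p.2 = 1 ∧ G p.1 p.2 = 1)).card with hN
  have hN1 : N = 2187 := by
    rw [hN]
    rw [Finset.sum_congr rfl (fun t _ => horth t)]
    norm_num
  -- pointwise in p : sum over t
  have hpt : ∀ p : Fin 324 × Fin 324,
      (∑ t : Fin 27, if (Fsq t p.1 p.2 = 1 ∧ G p.1 p.2 = 1) then 1 else 0)
        = if G p.1 p.2 = 1 then cm (blk p.1) (blk p.2) else 0 := by
    intro p
    by_cases hg : G p.1 p.2 = 1
    · simp only [hg, and_true, if_pos]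
      rw [cm, Finset.card_filter]
      exact Finset.sum_congr rfl fun t _ => by
        by_cases h : Fsq t p.1 p.2 = 1
        · rw [if_pos h, if_pos ((fsq_flip t p).mp h)]
        · rw [if_neg h, if_neg (fun hc => h ((fsq_flip t p).mpr hc))]
    · simp [hg]
  have hN2 : N = ∑ p : Fin 324 × Fin 324,
      (if G p.1 p.2 = 1 then cm (blk p.1) (blk p.2) else 0) := by
    rw [hN]
    rw [Finset.sum_congr rfl (fun t _ => Finset.card_filter _ _)]
    rw [Finset.sum_comm]
    exact Finset.sum_congr rfl fun p _ => hpt p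
  -- cast to ZMod 2
  have hcast : ((N : ℕ) : ZMod 2) = ∑ p : Fin 324 × Fin 324,
      (if G p.1 p.2 = 1 then ((Av (blk p.1) : ZMod 2) + (Av (blk p.2) : ZMod 2)) else 0) := by
    rw [hN2, Nat.cast_sum]
    refine Finset.sum_congr rfl fun p _ => ?_
    rw [Nat.cast_ite, Nat.cast_zero, cm, d4]
  -- split the sum
  have hsplit : ((N : ℕ) : ZMod 2)
      = (∑ p : Fin 324 × Fin 324, if G p.1 p.2 = 1 then (Av (blk p.1) : ZMod 2) else 0)
        + (∑ p : Fin 324 × Fin 324, if G p.1 p.2 = 1 then (Av (blk p.2) : ZMod 2) else 0) := by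
    rw [hcast, ← Finset.sum_add_distrib]
    refine Finset.sum_congr rfl fun p _ => ?_
    by_cases hg : G p.1 p.2 = 1 <;> simp [hg]
  -- row side
  have hrowsum : ∀ i : Fin 324, ((univ.filter fun j => G i j = 1).card : ZMod 2) = 1 := by
    intro i; rw [hrow i]; decide
  have hcolsum : ∀ j : Fin 324, ((univ.filter fun i => G i j = 1).card : ZMod 2) = 1 := by
    intro j; rw [hcol j]; decide
  have hS1 : (∑ p : Fin 324 × Fin 324, if G p.1 p.2 = 1 then (Av (blk p.1) : ZMod 2) else 0)
      = 1 := by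
    rw [Fintype.sum_prod_type]
    have inner : ∀ i : Fin 324,
        (∑ j : Fin 324, if G i j = 1 then (Av (blk i) : ZMod 2) else 0)
          = (Av (blk i) : ZMod 2) := by
      intro i
      have : (∑ j : Fin 324, if G i j = 1 then (Av (blk i) : ZMod 2) else 0)
          = (Av (blk i) : ZMod 2) * ∑ j : Fin 324, (if G i j = 1 then (1 : ZMod 2) else 0) := by
        rw [Finset.mul_sum]
        exact Finset.sum_congr rfl fun j _ => by by_cases hg : G i j = 1 <;> simp [hg]
      rw [this]
      have h2 : (∑ j : Fin 324, if G i j = 1 then (1 : ZMod 2) else 0)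
          = ((univ.filter fun j => G i j = 1).card : ZMod 2) := by
        rw [Finset.card_filter, Nat.cast_sum]
        exact Finset.sum_congr rfl fun j _ => by by_cases hg : G i j = 1 <;> simp [hg]
      rw [h2, hrowsum i, mul_one]
    rw [Finset.sum_congr rfl fun i _ => inner i]
    rw [sum_blk (fun k => (Av k : ZMod 2))]
    have : ∀ k : Fin 36, (9 : ℕ) • (Av k : ZMod 2) = (Av k : ZMod 2) := by
      intro k; rw [nsmul_eq_mul, show ((9:ℕ) : ZMod 2) = 1 by decide, one_mul]
    rw [Finset.sum_congr rfl fun k _ => this k, ← Nat.cast_sum, d5]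
  have hS2 : (∑ p : Fin 324 × Fin 324, if G p.1 p.2 = 1 then (Av (blk p.2) : ZMod 2) else 0)
      = 1 := by
    rw [Fintype.sum_prod_type, Finset.sum_comm]
    have inner : ∀ j : Fin 324,
        (∑ i : Fin 324, if G i j = 1 then (Av (blk j) : ZMod 2) else 0)
          = (Av (blk j) : ZMod 2) := by
      intro j
      have : (∑ i : Fin 324, if G i j = 1 then (Av (blk j) : ZMod 2) else 0)
          = (Av (blk j) : ZMod 2) * ∑ i : Fin 324, (if G i j = 1 then (1 : ZMod 2) else 0) := by
        rw [Finset.mul_sum]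
        exact Finset.sum_congr rfl fun i _ => by by_cases hg : G i j = 1 <;> simp [hg]
      rw [this]
      have h2 : (∑ i : Fin 324, if G i j = 1 then (1 : ZMod 2) else 0)
          = ((univ.filter fun i => G i j = 1).card : ZMod 2) := by
        rw [Finset.card_filter, Nat.cast_sum]
        exact Finset.sum_congr rfl fun i _ => by by_cases hg : G i j = 1 <;> simp [hg]
      rw [h2, hcolsum j, mul_one]
    rw [Finset.sum_congr rfl fun j _ => inner j]
    rw [sum_blk (fun k => (Av k : ZMod 2))]
    have : ∀ k : Fin 36, (9 : ℕ) • (Av k : ZMod 2) = (Av k : ZMod 2) := by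
      intro k; rw [nsmul_eq_mul, show ((9:ℕ) : ZMod 2) = 1 by decide, one_mul]
    rw [Finset.sum_congr rfl fun k _ => this k, ← Nat.cast_sum, d5]
  rw [hS1, hS2, hN1] at hsplit
  revert hsplit
  decide

/-- There exists a type-maximal set of 27 mutually orthogonal binary frequency squares of
type `(324; 315, 9)`: 27 pairwise orthogonal binary frequency squares of order 324 with
exactly 9 ones per row and column, such that no binary frequency square of type
`(324; 315, 9)` is orthogonal to all of them. -/
theorem stmt19 :
    ∃ F : Fin 27 → Fin 324 → Fin 324 → ℕ,
      (∀ t, IsBFS 324 9 (F t)) ∧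
      (∀ s t, s ≠ t → OrthBFS 324 9 9 (F s) (F t)) ∧
      ¬ ∃ G : Fin 324 → Fin 324 → ℕ,
        IsBFS 324 9 G ∧ ∀ t, OrthBFS 324 9 9 (F t) G := by
  refine ⟨Fsq, fun t => ⟨fun i j => ?_, row_count t, col_count t⟩, fun s t hst => ?_, ?_⟩
  · unfold Fsq; split
    · right; rfl
    · left; rfl
  · show _ = 9 * 9
    rw [orth_pair s t hst]
  · rintro ⟨G, hG, horth⟩
    exact no_common G hG horth
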